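/- arXiv:2312.01235 — 10 statements merged into one kernel-verified Lean document; each statement's English description precedes it below -/
import Mathlib

section
/- Suppose all I ≥ 2 users are homogeneous with parameters θ, ℓ, ξ > 0, d^max > 0, and ε → 0 (payoff U_i(d_i, d_{-i}) = ln(Σ_j d_j) - ξ ℓ d_i - θ d_i (I-1)(1 - d/d^max)ℓ² at a symmetric profile d). If d^max ≤ 1/(I ξ ℓ), then the symmetric profile d_i = d^max for all i is a Nash equilibrium: no user can strictly increase its payoff by unilaterally choosing any d_i ∈ [0, d^max]. -/
/-- Proposition 1 (second case): homogeneous dependent users (`ε → 0`).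
If `d^max ≤ 1/(I ξ ℓ)` then the symmetric profile where every user keeps all
its data `d^max` is a Nash equilibrium: no user can strictly improve by
unilaterally deviating to any `x ∈ [0, d^max]`. -/
theorem stmt2 (I : ℕ) (hI : 2 ≤ I) (θ ℓ ξ dmax : ℝ)
    (hθ : 0 < θ) (hℓ : 0 < ℓ) (hξ : 0 < ξ) (hd : 0 < dmax)
    (hcond : dmax ≤ 1 / ((I : ℝ) * ξ * ℓ)) :
    ∀ x ∈ Set.Icc (0 : ℝ) dmax,
      Real.log (x + ((I : ℝ) - 1) * dmax) - ξ * ℓ * x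
          - θ * x * ((I : ℝ) - 1) * (1 - dmax / dmax) * ℓ ^ 2
        ≤ Real.log ((I : ℝ) * dmax) - ξ * ℓ * dmax := by
  intro x hx
  obtain ⟨hx0, hx1⟩ := hx
  have hI2 : (2 : ℝ) ≤ (I : ℝ) := by exact_mod_cast hI
  have hIpos : (0 : ℝ) < (I : ℝ) := by linarith
  have hId : (0 : ℝ) < (I : ℝ) * dmax := by positivity
  have hxa : (0 : ℝ) < x + ((I : ℝ) - 1) * dmax := by nlinarith
  have hθterm : (1 - dmax / dmax) = 0 := by
    rw [div_self hd.ne']; ring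
  rw [hθterm, mul_zero, zero_mul, sub_zero]
  -- key: ξℓ ≤ 1/(I dmax)
  have hkey : ξ * ℓ * ((I : ℝ) * dmax) ≤ 1 := by
    have h1 : (0 : ℝ) < (I : ℝ) * ξ * ℓ := by positivity
    have := (le_div_iff₀ h1).mp hcond
    nlinarith
  have hlog : Real.log (x + ((I : ℝ) - 1) * dmax) - Real.log ((I : ℝ) * dmax)
      ≤ (x + ((I : ℝ) - 1) * dmax) / ((I : ℝ) * dmax) - 1 := by
    rw [← Real.log_div hxa.ne' hId.ne']
    exact Real.log_le_sub_one_of_pos (by positivity)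
  have h2 : (x + ((I : ℝ) - 1) * dmax) / ((I : ℝ) * dmax) - 1
      = (x - dmax) / ((I : ℝ) * dmax) := by
    field_simp
    ring
  have h3 : (x - dmax) / ((I : ℝ) * dmax) ≤ ξ * ℓ * (x - dmax) := by
    rw [div_le_iff₀ hId]
    nlinarith
  nlinarith [hlog]
end

section
/- Suppose all I ≥ 2 users are homogeneous with θ, ℓ, ξ > 0, d^max > 1/(I ξ ℓ), and ε = 0. Then d* = (1/(2θℓ(I-1)))·( d^max(ξ + θℓ(I-1)) - sqrt( (d^max)²(ξ + θℓ(I-1))² - 4θ(I-1)d^max/I ) ) satisfies 0 < d* < d^max and the symmetric profile d_i = d* for all i is a Nash equilibrium; in particular d* solves 1/(I·d) = ξℓ + θℓ²(I-1)(1 - d/d^max). -/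
/-!
Writing `a = θ ℓ (I - 1)`, the symmetric first-order condition multiplied by `d d^max / ℓ` is the
quadratic `p(d) = a d² - d^max (ξ + a) d + d^max / (I ℓ) = 0`, and `d*` is its smaller root.
Since `p(d^max) = d^max (1 / (I ℓ) - ξ d^max) < 0` exactly when `d^max > 1 / (I ξ ℓ)`, the
discriminant is positive and `d^max` lies strictly between the roots; both roots are positive
because `p(0) > 0` and their sum is positive. For the equilibrium property, a user's
payoff against the others playing `d*` is `log (x + c) - k x` with `c = (I - 1) d*`, and the
first-order condition says `k = 1 / (d* + c)`, so `log y ≤ y - 1` shows `x = d*` is a best response.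
-/

section Quadratic

variable {K : Type*} [Field K] [LinearOrder K] [IsStrictOrderedRing K] {a b c s t : K}

theorem discrim_pos_of_eval_neg (ha : 0 < a) (ht : a * (t * t) + b * t + c < 0) :
    0 < discrim a b c := by
  have : discrim a b c = (2 * a * t + b) ^ 2 - 4 * a * (a * (t * t) + b * t + c) := by
    rw [discrim]; ring
  nlinarith [sq_nonneg (2 * a * t + b)]

theorem quadratic_smaller_root_pos (ha : 0 < a) (hb : b < 0) (hc : 0 < c) (hs : 0 ≤ s)
    (h : discrim a b c = s * s) : 0 < (-b - s) / (2 * a) := by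
  have hs_lt : s < -b := by
    rw [discrim] at h
    nlinarith [mul_pos ha hc]
  exact div_pos (by linarith) (by positivity)

theorem quadratic_smaller_root_lt (ha : 0 < a) (hs : 0 ≤ s) (h : discrim a b c = s * s)
    (ht : a * (t * t) + b * t + c < 0) : (-b - s) / (2 * a) < t := by
  have hsq : (2 * a * t + b) ^ 2 < s ^ 2 := by
    rw [discrim] at h
    nlinarith
  have : -s < 2 * a * t + b := (abs_lt.mp (abs_lt_of_sq_lt_sq hsq hs)).1
  rw [div_lt_iff₀ (by positivity)]
  linarith

end Quadratic

theorem symmetric_foc_of_quadratic {I θ ℓ ξ dmax d : ℝ} (hI : I ≠ 0) (hℓ : ℓ ≠ 0)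
    (hdmax : dmax ≠ 0) (hd : d ≠ 0)
    (h : θ * ℓ * (I - 1) * (d * d) + -(dmax * (ξ + θ * ℓ * (I - 1))) * d + dmax / (I * ℓ) = 0) :
    1 / (I * d) = ξ * ℓ + θ * ℓ ^ 2 * (I - 1) * (1 - d / dmax) := by
  field_simp
  field_simp at h
  linear_combination h

theorem Real.log_add_sub_inv_mul_le {c x x₀ : ℝ} (hx : 0 < x + c) (hx₀ : 0 < x₀ + c) :
    Real.log (x + c) - (x₀ + c)⁻¹ * x ≤ Real.log (x₀ + c) - (x₀ + c)⁻¹ * x₀ := by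
  have h := Real.log_le_sub_one_of_pos (div_pos hx hx₀)
  rw [Real.log_div hx.ne' hx₀.ne'] at h
  have : (x + c) / (x₀ + c) - 1 = (x₀ + c)⁻¹ * x - (x₀ + c)⁻¹ * x₀ := by
    field_simp; ring
  linarith

/-- Proposition 1 (first case): homogeneous dependent users with
`d^max > 1/(I ξ ℓ)`.  The stated `d*` lies in `(0, d^max)`, the symmetric
profile `d_i = d*` is a Nash equilibrium, and `d*` solves the first-order
condition `1/(I d) = ξ ℓ + θ ℓ² (I-1)(1 - d/d^max)`. -/
theorem stmt3 (I : ℕ) (hI : 2 ≤ I) (θ ℓ ξ dmax : ℝ)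
    (hθ : 0 < θ) (hℓ : 0 < ℓ) (hξ : 0 < ξ) (hd : 0 < dmax)
    (hcond : 1 / ((I : ℝ) * ξ * ℓ) < dmax)
    (dstar : ℝ)
    (hdstar : dstar = (1 / (2 * θ * ℓ * ((I : ℝ) - 1))) *
      (dmax * (ξ + θ * ℓ * ((I : ℝ) - 1)) -
        Real.sqrt (dmax ^ 2 * (ξ + θ * ℓ * ((I : ℝ) - 1)) ^ 2
          - 4 * θ * ((I : ℝ) - 1) * dmax / (I : ℝ)))) :
    0 < dstar ∧ dstar < dmax ∧
    (∀ x ∈ Set.Icc (0 : ℝ) dmax,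
      Real.log (x + ((I : ℝ) - 1) * dstar) - ξ * ℓ * x
          - θ * x * ((I : ℝ) - 1) * (1 - dstar / dmax) * ℓ ^ 2
        ≤ Real.log (dstar + ((I : ℝ) - 1) * dstar) - ξ * ℓ * dstar
          - θ * dstar * ((I : ℝ) - 1) * (1 - dstar / dmax) * ℓ ^ 2) ∧
    1 / ((I : ℝ) * dstar) = ξ * ℓ + θ * ℓ ^ 2 * ((I : ℝ) - 1) * (1 - dstar / dmax) := by
  have hI₁ : (1 : ℝ) < I := by exact_mod_cast hI
  have ha : 0 < θ * ℓ * ((I : ℝ) - 1) := mul_pos (mul_pos hθ hℓ) (by linarith)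
  have hIℓ : 0 < (I : ℝ) * ℓ := by positivity
  have hp_dmax : θ * ℓ * (I - 1) * (dmax * dmax) + -(dmax * (ξ + θ * ℓ * (I - 1))) * dmax
      + dmax / (I * ℓ) < 0 := by
    rw [div_lt_iff₀ (by positivity)] at hcond
    have : dmax / (I * ℓ) < ξ * dmax * dmax := by
      rw [div_lt_iff₀ hIℓ]; nlinarith [mul_lt_mul_of_pos_left hcond hd]
    linarith
  have hdisc : discrim (θ * ℓ * (I - 1)) (-(dmax * (ξ + θ * ℓ * (I - 1)))) (dmax / (I * ℓ))
      = dmax ^ 2 * (ξ + θ * ℓ * (I - 1)) ^ 2 - 4 * θ * (I - 1) * dmax / I := by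
    rw [discrim]; field_simp
  have hΔ := discrim_pos_of_eval_neg ha hp_dmax
  rw [← hdisc] at hdstar
  set s := √(discrim (θ * ℓ * (I - 1)) (-(dmax * (ξ + θ * ℓ * (I - 1)))) (dmax / (I * ℓ)))
  have hs : discrim _ _ _ = s * s := (Real.mul_self_sqrt hΔ.le).symm
  have hroot : dstar = (-(-(dmax * (ξ + θ * ℓ * (I - 1)))) - s) / (2 * (θ * ℓ * (I - 1))) := by
    rw [hdstar]; ring
  have hpos : 0 < dstar := hroot ▸ quadratic_smaller_root_pos ha (by nlinarith) (by positivity)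
    (Real.sqrt_nonneg _) hs
  have hfoc := symmetric_foc_of_quadratic (by positivity) hℓ.ne' hd.ne' hpos.ne'
    (((quadratic_eq_zero_iff ha.ne' hs) dstar).mpr (Or.inr hroot))
  refine ⟨hpos, hroot ▸ quadratic_smaller_root_lt ha (Real.sqrt_nonneg _) hs hp_dmax,
    fun x hx => ?_, hfoc⟩
  have hk : (dstar + ((I : ℝ) - 1) * dstar)⁻¹ = 1 / ((I : ℝ) * dstar) := by
    rw [one_div]; ring_nf
  have hbest := Real.log_add_sub_inv_mul_le (c := ((I : ℝ) - 1) * dstar) (x := x) (x₀ := dstar)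
    (by nlinarith [hx.1]) (by nlinarith)
  rw [hk, hfoc] at hbest
  linarith
end

section
/- In the heterogeneous game, the profile d_i* = 0 for all i is a Nash equilibrium if and only if ε_i ≥ (ξ_i ℓ_i + θ_i Σ_{j≠i} ℓ_j²)^{-1} for every user i. -/
/-!
With every other user at `d_j = 0`, user `i`'s payoff reduces to `log (x + ε_i) - A_i x` with
`A_i = ξ_i ℓ_i + θ_i Σ_{j≠i} ℓ_j²`, a concave function of `x` with slope `ε_i⁻¹ - A_i` at `0`.
By `log y ≤ y - 1` it never exceeds its value at `0` when `ε_i⁻¹ ≤ A_i`; by `1 - y⁻¹ ≤ log y`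
it beats that value at every `0 < x < A_i⁻¹ - ε_i` otherwise.
-/

open Finset

/-- Payoff of user `i` in the federated unlearning data revocation game. -/
noncomputable def payoff {I : ℕ} (ξ ℓ θ ε dmax : Fin I → ℝ) (i : Fin I)
    (d : Fin I → ℝ) : ℝ :=
  Real.log (∑ j, d j + ε i) - ξ i * ℓ i * d i
    - θ i * d i * ∑ j ∈ Finset.univ.erase i, (1 - d j / dmax j) * (ℓ j) ^ 2

/-- `d` is a Nash equilibrium: no user can improve by a unilateral deviation
within its strategy set `[0, d_i^max]`. -/
def IsNash {I : ℕ} (ξ ℓ θ ε dmax : Fin I → ℝ) (d : Fin I → ℝ) : Prop :=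
  ∀ i : Fin I, ∀ x ∈ Set.Icc (0 : ℝ) (dmax i),
    payoff ξ ℓ θ ε dmax i (Function.update d i x) ≤ payoff ξ ℓ θ ε dmax i d

namespace Real

theorem log_add_sub_mul_le_log {a c x : ℝ} (hc : 0 < c) (ha : c⁻¹ ≤ a) (hx : 0 ≤ x) :
    log (x + c) - a * x ≤ log c := by
  have hxc : 0 < x + c := by linarith
  have hlog : log (x + c) - log c ≤ x * c⁻¹ := by
    calc log (x + c) - log c = log ((x + c) / c) := (log_div hxc.ne' hc.ne').symm
      _ ≤ (x + c) / c - 1 := log_le_sub_one_of_pos (div_pos hxc hc)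
      _ = x * c⁻¹ := by field_simp; ring
  nlinarith [mul_le_mul_of_nonneg_left ha hx]

theorem exists_log_lt_log_add_sub_mul {a b c : ℝ} (ha : 0 < a) (hb : 0 < b) (hc : 0 < c)
    (h : c < a⁻¹) : ∃ x ∈ Set.Icc 0 b, log c < log (x + c) - a * x := by
  set x := min b ((a⁻¹ - c) / 2)
  have hx : 0 < x := lt_min hb (by linarith)
  have hxc : 0 < x + c := by linarith
  have hax : a * (x + c) < 1 := by
    have : x + c < a⁻¹ := by linarith [min_le_right b ((a⁻¹ - c) / 2)]
    simpa [ha.ne'] using mul_lt_mul_of_pos_left this ha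
  have hlog : x / (x + c) ≤ log (x + c) - log c := by
    calc x / (x + c) = 1 - ((x + c) / c)⁻¹ := by field_simp; ring
      _ ≤ log ((x + c) / c) := one_sub_inv_le_log_of_pos (div_pos hxc hc)
      _ = log (x + c) - log c := log_div hxc.ne' hc.ne'
  have hgain : a * x < x / (x + c) := by
    rw [lt_div_iff₀ hxc]
    nlinarith
  exact ⟨x, ⟨hx.le, min_le_left _ _⟩, by linarith⟩

theorem forall_log_add_sub_mul_le_log_iff {a b c : ℝ} (ha : 0 < a) (hb : 0 < b) (hc : 0 < c) :
    (∀ x ∈ Set.Icc 0 b, log (x + c) - a * x ≤ log c) ↔ a⁻¹ ≤ c := by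
  refine ⟨fun hmax => ?_, fun h x hx => log_add_sub_mul_le_log hc ?_ hx.1⟩
  · by_contra! hlt
    obtain ⟨x, hx, hgain⟩ := exists_log_lt_log_add_sub_mul ha hb hc hlt
    exact (hmax x hx).not_gt hgain
  · exact (inv_le_comm₀ ha hc).mp h

end Real

section FullRevocation

variable {I : ℕ} (ξ ℓ θ ε dmax : Fin I → ℝ)

/-- The coefficient of `d_i` in `payoff … i` when every other user plays `0`. -/
noncomputable def fullRevocationCost (i : Fin I) : ℝ :=
  ξ i * ℓ i + θ i * ∑ j ∈ univ.erase i, ℓ j ^ 2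

variable {ξ ℓ θ} in
theorem fullRevocationCost_pos {i : Fin I} (hξ : 0 < ξ i) (hℓ : 0 < ℓ i) (hθ : 0 ≤ θ i) :
    0 < fullRevocationCost ξ ℓ θ i :=
  add_pos_of_pos_of_nonneg (mul_pos hξ hℓ)
    (mul_nonneg hθ (sum_nonneg fun j _ => sq_nonneg (ℓ j)))

theorem payoff_update_zero (i : Fin I) (x : ℝ) :
    payoff ξ ℓ θ ε dmax i (Function.update (fun _ => 0) i x)
      = Real.log (x + ε i) - fullRevocationCost ξ ℓ θ i * x := by
  have htotal : ∑ j, Function.update (fun _ : Fin I => (0 : ℝ)) i x j = x := by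
    simp [sum_update_of_mem (mem_univ i)]
  have hothers : ∑ j ∈ univ.erase i,
      (1 - Function.update (fun _ : Fin I => (0 : ℝ)) i x j / dmax j) * ℓ j ^ 2
        = ∑ j ∈ univ.erase i, ℓ j ^ 2 :=
    sum_congr rfl fun j hj => by simp [Function.update_of_ne (ne_of_mem_erase hj)]
  simp only [payoff, htotal, hothers, Function.update_self, fullRevocationCost]
  ring

theorem payoff_zero (i : Fin I) :
    payoff ξ ℓ θ ε dmax i (fun _ => 0) = Real.log (ε i) := by
  simpa using payoff_update_zero ξ ℓ θ ε dmax i 0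

end FullRevocation

theorem stmt4_general (I : ℕ) (ξ ℓ θ ε dmax : Fin I → ℝ)
    (hξ : ∀ i, 0 < ξ i) (hℓ : ∀ i, 0 < ℓ i) (hθ : ∀ i, 0 < θ i)
    (hε : ∀ i, 0 < ε i) (hdmax : ∀ i, 0 < dmax i) :
    IsNash ξ ℓ θ ε dmax (fun _ => 0) ↔
      ∀ i : Fin I,
        (ξ i * ℓ i + θ i * ∑ j ∈ Finset.univ.erase i, (ℓ j) ^ 2)⁻¹ ≤ ε i := by
  refine forall_congr' fun i => ?_
  simp only [payoff_update_zero, payoff_zero]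
  exact Real.forall_log_add_sub_mul_le_log_iff
    (fullRevocationCost_pos (hξ i) (hℓ i) (hθ i).le) (hdmax i) (hε i)

/-- Proposition 2 (full revocation case): all users fully revoking
(`d_i* = 0` for all `i`) is a Nash equilibrium iff
`ε_i ≥ (ξ_i ℓ_i + θ_i Σ_{j≠i} ℓ_j²)⁻¹` for every user `i`. -/
theorem stmt4 (I : ℕ) (hI : 1 ≤ I) (ξ ℓ θ ε dmax : Fin I → ℝ)
    (hξ : ∀ i, 0 < ξ i) (hℓ : ∀ i, 0 < ℓ i) (hθ : ∀ i, 0 < θ i)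
    (hε : ∀ i, 0 < ε i) (hdmax : ∀ i, 0 < dmax i) :
    IsNash ξ ℓ θ ε dmax (fun _ => 0) ↔
      ∀ i : Fin I,
        (ξ i * ℓ i + θ i * ∑ j ∈ Finset.univ.erase i, (ℓ j) ^ 2)⁻¹ ≤ ε i :=
  stmt4_general I ξ ℓ θ ε dmax hξ hℓ hθ hε hdmax
end

section
/- In the heterogeneous game, the profile d_i* = d_i^max for all i is a Nash equilibrium if and only if ε_i ≤ (ξ_i ℓ_i)^{-1} - Σ_j d_j^max for every user i. -/
open Finset

/-!
When every other user keeps all of its data, the unlearning cost of user `i` vanishes and its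
payoff becomes `x ↦ log (B + x) - ξ_i ℓ_i x` with `B = Σ_{j ≠ i} d_j^max + ε_i`. This function is
concave, so `x = d_i^max` maximises it on `[0, d_i^max]` exactly when its derivative
`(B + d_i^max)⁻¹ - ξ_i ℓ_i` there is nonnegative, which is the stated inequality.
-/

theorem isNash_iff_isMaxOn {I : ℕ} (ξ ℓ θ ε dmax d : Fin I → ℝ) :
    IsNash ξ ℓ θ ε dmax d ↔ ∀ i, IsMaxOn (fun x => payoff ξ ℓ θ ε dmax i (Function.update d i x))
      (Set.Icc 0 (dmax i)) (d i) := by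
  simp only [IsNash, isMaxOn_iff, Function.update_eq_self]

theorem payoff_update_of_others_max {I : ℕ} (ξ ℓ θ ε dmax : Fin I → ℝ)
    (hdmax : ∀ j, dmax j ≠ 0) (i : Fin I) (x : ℝ) :
    payoff ξ ℓ θ ε dmax i (Function.update dmax i x)
      = Real.log ((∑ j, dmax j) - dmax i + ε i + x) - ξ i * ℓ i * x := by
  have hsum : ∑ j, Function.update dmax i x j = (∑ j, dmax j) - dmax i + x := by
    rw [sum_update_of_mem (mem_univ i), sdiff_singleton_eq_erase,
      sum_erase_eq_sub (mem_univ i)]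
    ring
  have hcost : ∑ j ∈ univ.erase i, (1 - Function.update dmax i x j / dmax j) * ℓ j ^ 2 = 0 :=
    sum_eq_zero fun j hj => by
      rw [Function.update_of_ne (ne_of_mem_erase hj), div_self (hdmax j), sub_self, zero_mul]
  rw [payoff, hsum, hcost, Function.update_self]
  ring_nf

theorem hasDerivAt_log_add_sub_mul {B c x : ℝ} (hBx : 0 < B + x) :
    HasDerivAt (fun y => Real.log (B + y) - c * y) ((B + x)⁻¹ - c) x := by
  have hlog := ((hasDerivAt_id x).const_add B).log hBx.ne'
  simpa using hlog.fun_sub ((hasDerivAt_id x).const_mul c)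

open Set in
theorem isMaxOn_log_add_sub_mul_Icc_iff {B c m : ℝ} (hB : 0 < B) (hm : 0 < m) :
    IsMaxOn (fun x => Real.log (B + x) - c * x) (Icc 0 m) m ↔ c ≤ (B + m)⁻¹ := by
  have hBm : 0 < B + m := by linarith
  constructor
  · intro hmax
    have hcone : -m ∈ posTangentConeAt (Icc 0 m) m :=
      mem_posTangentConeAt_of_segment_subset (by simp [segment_eq_Icc', hm.le])
    have hslope := hmax.localize.hasFDerivWithinAt_nonpos
      (hasDerivAt_log_add_sub_mul (c := c) hBm).hasFDerivAt.hasFDerivWithinAt hcone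
    simp only [ContinuousLinearMap.toSpanSingleton_apply, smul_eq_mul, neg_mul,
      Left.neg_nonpos_iff] at hslope
    nlinarith
  · intro hc x ⟨hx0, hxm⟩
    have hBx : 0 < B + x := by linarith
    have htangent : Real.log (B + x) - Real.log (B + m) ≤ (x - m) / (B + m) := by
      rw [← Real.log_div hBx.ne' hBm.ne']
      calc Real.log ((B + x) / (B + m)) ≤ (B + x) / (B + m) - 1 :=
            Real.log_le_sub_one_of_pos (by positivity)
        _ = (x - m) / (B + m) := by field_simp; ring
    have hslope : (x - m) / (B + m) ≤ c * (x - m) := by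
      rw [div_eq_inv_mul]
      exact mul_le_mul_of_nonpos_right hc (by linarith)
    simp only [mem_ofPred_eq]
    linarith

theorem stmt5_general (I : ℕ) (ξ ℓ θ ε dmax : Fin I → ℝ)
    (hξ : ∀ i, 0 < ξ i) (hℓ : ∀ i, 0 < ℓ i)
    (hε : ∀ i, 0 < ε i) (hdmax : ∀ i, 0 < dmax i) :
    IsNash ξ ℓ θ ε dmax dmax ↔
      ∀ i : Fin I, ε i ≤ (ξ i * ℓ i)⁻¹ - ∑ j, dmax j := by
  rw [isNash_iff_isMaxOn]
  refine forall_congr' fun i => ?_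
  have hle : dmax i ≤ ∑ j, dmax j := single_le_sum (fun j _ => (hdmax j).le) (mem_univ i)
  have hB : 0 < (∑ j, dmax j) - dmax i + ε i := by linarith [hε i]
  have hc : 0 < ξ i * ℓ i := mul_pos (hξ i) (hℓ i)
  simp only [payoff_update_of_others_max ξ ℓ θ ε dmax fun j => (hdmax j).ne']
  rw [isMaxOn_log_add_sub_mul_Icc_iff hB (hdmax i), le_inv_comm₀ hc (by linarith [hdmax i])]
  constructor <;> intro h <;> linarith

/-- Proposition 2 (no-revocation case): the profile `d_i* = d_i^max` for all `i`
is a Nash equilibrium iff `ε_i ≤ (ξ_i ℓ_i)⁻¹ - Σ_j d_j^max` for every user `i`. -/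
theorem stmt5 (I : ℕ) (hI : 1 ≤ I) (ξ ℓ θ ε dmax : Fin I → ℝ)
    (hξ : ∀ i, 0 < ξ i) (hℓ : ∀ i, 0 < ℓ i) (hθ : ∀ i, 0 < θ i)
    (hε : ∀ i, 0 < ε i) (hdmax : ∀ i, 0 < dmax i) :
    IsNash ξ ℓ θ ε dmax dmax ↔
      ∀ i : Fin I, ε i ≤ (ξ i * ℓ i)⁻¹ - ∑ j, dmax j :=
  stmt5_general I ξ ℓ θ ε dmax hξ hℓ hε hdmax
end

section
/- There exist parameters (for I = 2 users) such that both the all-zero profile (both users fully revoke) and the all-maximum profile (no user revokes) are Nash equilibria of the same game; hence the Nash equilibrium of the data revocation game need not be unique. -/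
open Finset

lemma aux1 (x : ℝ) (hx : 0 ≤ x) : Real.log (x + 1/2) ≤ Real.log (1/2) + 2*x := by
  have h : (0:ℝ) < (x + 1/2) / (1/2) := by positivity
  have := Real.log_le_sub_one_of_pos h
  rw [Real.log_div (by linarith) (by norm_num)] at this
  nlinarith [this]

lemma aux2 (x : ℝ) (h0 : 0 ≤ x) (h1 : x ≤ 1/8) :
    Real.log (x + 5/8) ≤ Real.log (3/4) + (x - 1/8) := by
  have h : (0:ℝ) < (x + 5/8) / (3/4) := by positivity
  have := Real.log_le_sub_one_of_pos h
  rw [Real.log_div (by linarith) (by norm_num)] at this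
  nlinarith [this]

/-- Non-uniqueness: there exist positive parameters for two users such that both
the all-zero profile (full revocation) and the all-maximum profile
(no revocation) are Nash equilibria of the same game. -/
theorem stmt6 :
    ∃ ξ ℓ θ ε dmax : Fin 2 → ℝ,
      (∀ i, 0 < ξ i) ∧ (∀ i, 0 < ℓ i) ∧ (∀ i, 0 < θ i) ∧
      (∀ i, 0 < ε i) ∧ (∀ i, 0 < dmax i) ∧
      IsNash ξ ℓ θ ε dmax (fun _ => 0) ∧
      IsNash ξ ℓ θ ε dmax dmax := by
  refine ⟨fun _ => 1, fun _ => 1, fun _ => 1, fun _ => 1/2, fun _ => 1/8,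
    fun i => one_pos, fun i => one_pos, fun i => one_pos,
    fun i => by norm_num, fun i => by norm_num, ?_, ?_⟩
  · intro i x hx
    obtain ⟨hx0, hx1⟩ := hx
    have key := aux1 x hx0
    fin_cases i <;>
      simp only [payoff, Fin.sum_univ_two, Function.update, Fin.isValue,
        show (Finset.univ.erase (0 : Fin 2)) = {1} from by decide,
        show (Finset.univ.erase (1 : Fin 2)) = {0} from by decide,
        Finset.sum_singleton] <;>
      norm_num <;> nlinarith [key]
  · intro i x hx
    obtain ⟨hx0, hx1⟩ := hx
    have key := aux2 x hx0 hx1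
    fin_cases i <;>
      simp only [payoff, Fin.sum_univ_two, Function.update, Fin.isValue,
        show (Finset.univ.erase (0 : Fin 2)) = {1} from by decide,
        show (Finset.univ.erase (1 : Fin 2)) = {0} from by decide,
        Finset.sum_singleton] <;>
      norm_num <;>
      [rw [show x + 1/8 + 1/2 = x + 5/8 from by ring];
       rw [show (1:ℝ)/8 + x + 1/2 = x + 5/8 from by ring]] <;>
      linarith [key]
end

section
/- Assume θ_i = 0 for all i, common maximum data size d^max > 0, and users ordered so that (ξ_1 ℓ_1)^{-1} - ε_1 < (ξ_2 ℓ_2)^{-1} - ε_2 < … < (ξ_I ℓ_I)^{-1} - ε_I. Then at any Nash equilibrium d*, the remaining data sizes are ordered: d_1* ≤ d_2* ≤ … ≤ d_I*. -/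
open Finset

/-- Payoff with negligible unlearning costs (`θ_i = 0`). -/
noncomputable def payoff0 {I : ℕ} (ξ ℓ ε : Fin I → ℝ) (i : Fin I)
    (d : Fin I → ℝ) : ℝ :=
  Real.log (∑ j, d j + ε i) - ξ i * ℓ i * d i

/-- Nash equilibrium of the game with common maximum data size `dmax`. -/
def IsNash0 {I : ℕ} (ξ ℓ ε : Fin I → ℝ) (dmax : ℝ) (d : Fin I → ℝ) : Prop :=
  ∀ i : Fin I, ∀ x ∈ Set.Icc (0 : ℝ) dmax,
    payoff0 ξ ℓ ε i (Function.update d i x) ≤ payoff0 ξ ℓ ε i d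

/-!
At an equilibrium `d` with total `S = ∑ j, d j`, each `d i` maximizes
`x ↦ log (x + S - d i + ε i) - ξ i ℓ i x` on `[0, dmax]`, whose derivative at `d i` is
`(S + ε i)⁻¹ - ξ i ℓ i`. The one-sided first-order conditions give `S + ε i ≤ (ξ i ℓ i)⁻¹` when
`0 < d i` and `(ξ i ℓ i)⁻¹ ≤ S + ε i` when `d i < dmax`. If `d j < d i` for some `i < j`, both apply
(to `i` and `j` respectively) and squeeze `S` between `(ξ j ℓ j)⁻¹ - ε j` and `(ξ i ℓ i)⁻¹ - ε i`,
against the ordering of the users.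
-/

section FirstOrder

variable {f : ℝ → ℝ} {a b x f' : ℝ}

lemma IsMaxOn.hasDerivAt_nonneg (h : IsMaxOn f (Set.Icc a x) x) (hf : HasDerivAt f f' x)
    (hax : a < x) : 0 ≤ f' := by
  have hcone : a - x ∈ posTangentConeAt (Set.Icc a x) x :=
    sub_mem_posTangentConeAt_of_segment_subset (by rw [segment_symm, segment_eq_Icc hax.le])
  have := h.localize.hasFDerivWithinAt_nonpos hf.hasFDerivAt.hasFDerivWithinAt hcone
  simp only [ContinuousLinearMap.toSpanSingleton_apply, smul_eq_mul] at this
  nlinarith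

lemma IsMaxOn.hasDerivAt_nonpos (h : IsMaxOn f (Set.Icc x b) x) (hf : HasDerivAt f f' x)
    (hxb : x < b) : f' ≤ 0 := by
  have hcone : b - x ∈ posTangentConeAt (Set.Icc x b) x :=
    sub_mem_posTangentConeAt_of_segment_subset (segment_eq_Icc hxb.le).subset
  have := h.localize.hasFDerivWithinAt_nonpos hf.hasFDerivAt.hasFDerivWithinAt hcone
  simp only [ContinuousLinearMap.toSpanSingleton_apply, smul_eq_mul] at this
  nlinarith

end FirstOrder

section Game

variable {I : ℕ} {ξ ℓ ε : Fin I → ℝ} {dmax : ℝ} {d : Fin I → ℝ} {i : Fin I}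

lemma payoff0_update (x : ℝ) :
    payoff0 ξ ℓ ε i (Function.update d i x) =
      Real.log (x + (∑ j, d j - d i + ε i)) - ξ i * ℓ i * x := by
  rw [payoff0, Finset.sum_update_of_mem (mem_univ i), ← sum_erase_eq_sub (mem_univ i),
    sdiff_singleton_eq_erase, Function.update_self, add_assoc]

lemma hasDerivAt_payoff0_update (hpos : 0 < ∑ j, d j + ε i) :
    HasDerivAt (fun x ↦ payoff0 ξ ℓ ε i (Function.update d i x))
      ((∑ j, d j + ε i)⁻¹ - ξ i * ℓ i) (d i) := by
  simp only [payoff0_update]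
  have hlog := ((hasDerivAt_id (d i)).add_const (∑ j, d j - d i + ε i)).log (by
    rw [id]; linarith)
  refine (hlog.sub ((hasDerivAt_id (d i)).const_mul (ξ i * ℓ i))).congr_deriv ?_
  rw [id, mul_one]
  ring

lemma IsNash0.isMaxOn (hne : IsNash0 ξ ℓ ε dmax d) (i : Fin I) :
    IsMaxOn (fun x ↦ payoff0 ξ ℓ ε i (Function.update d i x)) (Set.Icc 0 dmax) (d i) := by
  intro x hx
  simpa only [Set.mem_ofPred_eq, Function.update_eq_self] using hne i x hx

lemma IsNash0.sum_add_le_inv (hne : IsNash0 ξ ℓ ε dmax d) (hc : 0 < ξ i * ℓ i)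
    (hpos : 0 < ∑ j, d j + ε i) (hpos_i : 0 < d i) (hmax_i : d i ≤ dmax) :
    ∑ j, d j + ε i ≤ (ξ i * ℓ i)⁻¹ := by
  have := ((hne.isMaxOn i).on_subset (Set.Icc_subset_Icc_right hmax_i)).hasDerivAt_nonneg
    (hasDerivAt_payoff0_update hpos) hpos_i
  exact (le_inv_comm₀ hc hpos).mp (by linarith)

lemma IsNash0.inv_le_sum_add (hne : IsNash0 ξ ℓ ε dmax d) (hc : 0 < ξ i * ℓ i)
    (hpos : 0 < ∑ j, d j + ε i) (hnonneg_i : 0 ≤ d i) (hlt_i : d i < dmax) :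
    (ξ i * ℓ i)⁻¹ ≤ ∑ j, d j + ε i := by
  have := ((hne.isMaxOn i).on_subset (Set.Icc_subset_Icc_left hnonneg_i)).hasDerivAt_nonpos
    (hasDerivAt_payoff0_update hpos) hlt_i
  exact (inv_le_comm₀ hc hpos).mpr (by linarith)

end Game

theorem stmt10_general (I : ℕ) (ξ ℓ ε : Fin I → ℝ) (dmax : ℝ)
    (hξ : ∀ i, 0 < ξ i) (hℓ : ∀ i, 0 < ℓ i) (hε : ∀ i, 0 < ε i)
    (horder : ∀ i j : Fin I, i < j →
      (ξ i * ℓ i)⁻¹ - ε i < (ξ j * ℓ j)⁻¹ - ε j)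
    (d : Fin I → ℝ) (hd : ∀ j, d j ∈ Set.Icc (0 : ℝ) dmax)
    (hne : IsNash0 ξ ℓ ε dmax d) :
    ∀ i j : Fin I, i < j → d i ≤ d j := by
  intro i j hij
  by_contra! hji
  have hsum : 0 ≤ ∑ k, d k := sum_nonneg fun k _ ↦ (hd k).1
  have hi := hne.sum_add_le_inv (mul_pos (hξ i) (hℓ i)) (by linarith [hε i])
    ((hd j).1.trans_lt hji) (hd i).2
  have hj := hne.inv_le_sum_add (mul_pos (hξ j) (hℓ j)) (by linarith [hε j])
    (hd j).1 (hji.trans_le (hd i).2)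
  linarith [horder i j hij]

/-- Proposition 4: with negligible unlearning costs, common `d^max`, and users
ordered by strictly increasing remaining metric `(ξ_i ℓ_i)⁻¹ - ε_i`, the
remaining data sizes at any Nash equilibrium are correspondingly ordered. -/
theorem stmt10 (I : ℕ) (ξ ℓ ε : Fin I → ℝ) (dmax : ℝ)
    (hξ : ∀ i, 0 < ξ i) (hℓ : ∀ i, 0 < ℓ i) (hε : ∀ i, 0 < ε i)
    (hdmax : 0 < dmax)
    (horder : ∀ i j : Fin I, i < j →
      (ξ i * ℓ i)⁻¹ - ε i < (ξ j * ℓ j)⁻¹ - ε j)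
    (d : Fin I → ℝ) (hd : ∀ j, d j ∈ Set.Icc (0 : ℝ) dmax)
    (hne : IsNash0 ξ ℓ ε dmax d) :
    ∀ i j : Fin I, i < j → d i ≤ d j :=
  stmt10_general I ξ ℓ ε dmax hξ hℓ hε horder d hd hne
end

section
/- Assume θ_i = 0 for all i, common d^max > 0, strictly increasing remaining metric m_i := (ξ_i ℓ_i)^{-1} - ε_i, and suppose there exists a user j with (I-j)·d^max ≤ m_j ≤ (I-j+1)·d^max. Then the profile d_i* = 0 for i < j, d_j* = m_j - (I-j)·d^max, d_i* = d^max for i > j is a Nash equilibrium of the game. -/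
open Finset

/-!
Each user's payoff `log (S + d_i + ε_i) - ξ_i ℓ_i d_i` is concave in `d_i`, with unconstrained
maximiser at total `S + d_i = m_i`. So a profile with total `T` is an equilibrium as soon as every
user moves towards `m_i - T` as far as the box `[0, d^max]` allows. In the stated profile `T = m_j`;
by strict monotonicity of `m`, users below `j` want less than `0`, users above `j` want more than
`d^max`, and user `j` is exactly at `m_j`.
-/

lemma Real.log_sub_mul_le_log_sub_mul {a b c : ℝ} (ha : 0 < a) (hb : 0 < b)
    (h : (b - a) * (1 - c * a) ≤ 0) :
    Real.log b - c * b ≤ Real.log a - c * a := by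
  have htangent : Real.log b ≤ Real.log a + (b - a) / a := by
    have := Real.log_le_sub_one_of_pos (div_pos hb ha)
    rw [Real.log_div hb.ne' ha.ne', div_sub_one ha.ne'] at this
    linarith
  have hslope : (b - a) / a - c * (b - a) = (b - a) * (1 - c * a) / a := by
    field_simp
  have : (b - a) * (1 - c * a) / a ≤ 0 := div_nonpos_of_nonpos_of_nonneg h ha.le
  linarith

lemma sum_update_eq_add_sub {ι G : Type*} [Fintype ι] [DecidableEq ι] [AddCommGroup G]
    (d : ι → G) (i : ι) (x : G) :
    ∑ k, Function.update d i x k = ∑ k, d k + (x - d i) := by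
  rw [sum_update_of_mem (mem_univ i), sum_eq_add_sum_sdiff_singleton_of_mem (mem_univ i) d]
  abel

lemma payoff0_update_le {I : ℕ} (ξ ℓ ε : Fin I → ℝ) (i : Fin I) (d : Fin I → ℝ) (x : ℝ)
    (hpos : 0 < ∑ k, d k + ε i) (hpos' : 0 < ∑ k, Function.update d i x k + ε i)
    (h : (x - d i) * (1 - ξ i * ℓ i * (∑ k, d k + ε i)) ≤ 0) :
    payoff0 ξ ℓ ε i (Function.update d i x) ≤ payoff0 ξ ℓ ε i d := by
  rw [sum_update_eq_add_sub] at hpos'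
  have hdev : ∑ k, d k + (x - d i) + ε i - (∑ k, d k + ε i) = x - d i := by ring
  have := Real.log_sub_mul_le_log_sub_mul (c := ξ i * ℓ i) hpos hpos' (by rwa [hdev])
  simp only [payoff0, sum_update_eq_add_sub, Function.update_self]
  linarith [show ξ i * ℓ i * (∑ k, d k + (x - d i) + ε i) - ξ i * ℓ i * x
    = ξ i * ℓ i * (∑ k, d k + ε i) - ξ i * ℓ i * d i by ring]

-- `(ξ i * ℓ i)⁻¹ - ε i` is the remaining metric `m i`; `h` is the KKT condition of each user's
-- concave best-response problem.
theorem isNash0_of_mul_nonpos {I : ℕ} {ξ ℓ ε : Fin I → ℝ} {dmax : ℝ} {d : Fin I → ℝ}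
    (hξℓ : ∀ i, 0 < ξ i * ℓ i) (hε : ∀ i, 0 < ε i) (hd : ∀ i, 0 ≤ d i)
    (h : ∀ i, ∀ x ∈ Set.Icc 0 dmax, (x - d i) * ((ξ i * ℓ i)⁻¹ - ε i - ∑ k, d k) ≤ 0) :
    IsNash0 ξ ℓ ε dmax d := by
  intro i x hx
  have hupdate : ∀ k, 0 ≤ Function.update d i x k := by
    intro k
    rcases eq_or_ne k i with rfl | hk
    · simpa using hx.1
    · simpa [hk] using hd k
  apply payoff0_update_le
  · linarith [sum_nonneg fun k (_ : k ∈ univ) => hd k, hε i]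
  · linarith [sum_nonneg fun k (_ : k ∈ univ) => hupdate k, hε i]
  · have hgap : 1 - ξ i * ℓ i * (∑ k, d k + ε i)
        = ξ i * ℓ i * ((ξ i * ℓ i)⁻¹ - ε i - ∑ k, d k) := by
      rw [mul_sub, mul_sub, mul_inv_cancel₀ (hξℓ i).ne']
      ring
    rw [hgap, mul_left_comm]
    exact mul_nonpos_of_nonneg_of_nonpos (hξℓ i).le (h i x hx)

lemma sum_threshold_profile {I : ℕ} (j : Fin I) (a b : ℝ) :
    ∑ k : Fin I, (if k < j then 0 else if k = j then a else b)
      = a + ((I : ℝ) - (j : ℕ) - 1) * b := by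
  have hsplit : ∀ k : Fin I, (if k < j then 0 else if k = j then a else b)
      = (if k = j then a else 0) + (if j < k then b else 0) := by
    intro k
    rcases lt_trichotomy k j with h | rfl | h
    · simp [h, h.ne, not_lt.mpr h.le]
    · simp
    · simp [h, h.ne', not_lt.mpr h.le]
  have hcard : ((#(Ioi j) : ℕ) : ℝ) = (I : ℝ) - (j : ℕ) - 1 := by
    rw [Fin.card_Ioi, Nat.sub_sub, Nat.cast_sub (by omega)]
    push_cast
    ring
  rw [sum_congr rfl fun k _ => hsplit k, sum_add_distrib, sum_ite_eq' univ j, ← sum_filter,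
    filter_lt_eq_Ioi, sum_const, nsmul_eq_mul, hcard]
  simp

-- Users are 0-indexed: the paper's user `j` is `j + 1` here, hence the extra `- 1`.
theorem stmt11_general (I : ℕ) (ξ ℓ ε : Fin I → ℝ) (dmax : ℝ)
    (hξ : ∀ i, 0 < ξ i) (hℓ : ∀ i, 0 < ℓ i) (hε : ∀ i, 0 < ε i)
    (hdmax : 0 < dmax)
    (m : Fin I → ℝ) (hm : ∀ i, m i = (ξ i * ℓ i)⁻¹ - ε i)
    (horder : ∀ i k : Fin I, i < k → m i < m k)
    (j : Fin I)
    (hlo : ((I : ℝ) - (j : ℕ) - 1) * dmax ≤ m j) :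
    IsNash0 ξ ℓ ε dmax (fun i =>
      if i < j then 0
      else if i = j then m j - ((I : ℝ) - (j : ℕ) - 1) * dmax
      else dmax) := by
  set D : Fin I → ℝ := fun i =>
    if i < j then 0
    else if i = j then m j - ((I : ℝ) - (j : ℕ) - 1) * dmax
    else dmax
  have hsum : ∑ k, D k = m j := by
    simp only [D, sum_threshold_profile]
    ring
  refine isNash0_of_mul_nonpos (fun i => mul_pos (hξ i) (hℓ i)) hε ?_ ?_
  · intro k
    simp only [D]
    split_ifs <;> linarith
  intro i x hx
  rw [← hm, hsum]
  rcases lt_trichotomy i j with h | rfl | h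
  · have hDi : D i = 0 := if_pos h
    rw [hDi]
    exact mul_nonpos_of_nonneg_of_nonpos (by linarith [hx.1]) (by linarith [horder i j h])
  · simp
  · have hDi : D i = dmax := by simp [D, h.ne', not_lt.mpr h.le]
    rw [hDi]
    exact mul_nonpos_of_nonpos_of_nonneg (by linarith [hx.2]) (by linarith [horder j i h])

/-- Theorem 2 case (i), existence: with remaining metric
`m i = (ξ_i ℓ_i)⁻¹ - ε_i` strictly increasing, if a (0-indexed) user `j`
satisfies `(I-j-1) d^max ≤ m j ≤ (I-j) d^max` (the paper's `(I-j) d^max ≤ m_j ≤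
(I-j+1) d^max` in 1-indexed form), then the profile where users before `j`
fully revoke, user `j` keeps `m j - (I-j-1) d^max`, and users after `j` keep
everything, is a Nash equilibrium. -/
theorem stmt11 (I : ℕ) (ξ ℓ ε : Fin I → ℝ) (dmax : ℝ)
    (hξ : ∀ i, 0 < ξ i) (hℓ : ∀ i, 0 < ℓ i) (hε : ∀ i, 0 < ε i)
    (hdmax : 0 < dmax)
    (m : Fin I → ℝ) (hm : ∀ i, m i = (ξ i * ℓ i)⁻¹ - ε i)
    (horder : ∀ i k : Fin I, i < k → m i < m k)
    (j : Fin I)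
    (hlo : ((I : ℝ) - (j : ℕ) - 1) * dmax ≤ m j)
    (hhi : m j ≤ ((I : ℝ) - (j : ℕ)) * dmax) :
    IsNash0 ξ ℓ ε dmax (fun i =>
      if i < j then 0
      else if i = j then m j - ((I : ℝ) - (j : ℕ) - 1) * dmax
      else dmax) :=
  stmt11_general I ξ ℓ ε dmax hξ hℓ hε hdmax m hm horder j hlo
end

section
/- Assume θ_i = 0 for all i, common d^max > 0, strictly increasing remaining metric m_i := (ξ_i ℓ_i)^{-1} - ε_i, and suppose there exists a user j with m_j < (I-j)·d^max < m_{j+1}. Then the profile d_i* = 0 for i ≤ j and d_i* = d^max for i > j is a Nash equilibrium. -/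
open Finset

/-- Key concavity estimate: if the "slope condition" `(x-y)(s⁻¹ - a) ≤ 0`
holds at the reference point `y`, then deviating to `x` does not help. -/
lemma key_ineq (a s t x y : ℝ) (hs : 0 < s) (ht : 0 < t) (hst : t - s = x - y)
    (h : (x - y) * (s⁻¹ - a) ≤ 0) :
    Real.log t - a * x ≤ Real.log s - a * y := by
  have hlog := Real.log_le_sub_one_of_pos (show 0 < t / s from div_pos ht hs)
  rw [Real.log_div ht.ne' hs.ne'] at hlog
  have h1 : t / s - 1 = (x - y) * s⁻¹ := by
    field_simp
    linarith
  rw [h1] at hlog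
  nlinarith

/-- Theorem 2 case (ii): if a (0-indexed) user `j` satisfies
`m j < (I-j-1) d^max < m (j+1)` (paper's `m_j < (I-j) d^max < m_{j+1}` in
1-indexed form), then the profile where users up to and including `j` fully
revoke and users after `j` keep everything is a Nash equilibrium. -/
theorem stmt12 (I : ℕ) (ξ ℓ ε : Fin I → ℝ) (dmax : ℝ)
    (hξ : ∀ i, 0 < ξ i) (hℓ : ∀ i, 0 < ℓ i) (hε : ∀ i, 0 < ε i)
    (hdmax : 0 < dmax)
    (m : Fin I → ℝ) (hm : ∀ i, m i = (ξ i * ℓ i)⁻¹ - ε i)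
    (horder : ∀ i k : Fin I, i < k → m i < m k)
    (j : Fin I) (hj : (j : ℕ) + 1 < I)
    (hlo : m j < ((I : ℝ) - (j : ℕ) - 1) * dmax)
    (hhi : ((I : ℝ) - (j : ℕ) - 1) * dmax < m ⟨(j : ℕ) + 1, hj⟩) :
    IsNash0 ξ ℓ ε dmax (fun i => if i ≤ j then 0 else dmax) := by
  set d : Fin I → ℝ := fun i => if i ≤ j then 0 else dmax with hd
  -- the total sum
  have hfilter : (univ.filter fun k : Fin I => ¬ k ≤ j) = Ioi j := by
    ext k; simp [not_le]
  have hcard : ((univ.filter fun k : Fin I => ¬ k ≤ j).card : ℝ)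
      = (I : ℝ) - (j : ℕ) - 1 := by
    rw [hfilter, Fin.card_Ioi]
    have h1 : I - 1 - (j : ℕ) = I - ((j:ℕ)+1) := by omega
    rw [h1, Nat.cast_sub hj.le]
    push_cast; ring
  have hS : ∑ k, d k = ((I : ℝ) - (j : ℕ) - 1) * dmax := by
    rw [hd]
    rw [Finset.sum_ite, Finset.sum_const_zero, Finset.sum_const, zero_add,
      nsmul_eq_mul, hcard]
  intro i x hx
  obtain ⟨hx0, hx1⟩ := hx
  have ha : 0 < ξ i * ℓ i := mul_pos (hξ i) (hℓ i)
  -- sum after update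
  have hupd : ∑ k, Function.update d i x k = (∑ k, d k) - d i + x := by
    have h1 : ∑ k, Function.update d i x k
        = x + ∑ k ∈ univ.erase i, d k := by
      rw [← Finset.sum_erase_add _ _ (mem_univ i), Function.update_self,
        add_comm]
      congr 1
      exact Finset.sum_congr rfl fun k hk =>
        Function.update_of_ne (Finset.ne_of_mem_erase hk) _ _
    have h2 : ∑ k ∈ univ.erase i, d k = (∑ k, d k) - d i := by
      rw [Finset.sum_erase_eq_sub (mem_univ i)]
    rw [h1, h2]; ring
  have hSpos : 0 < (∑ k, d k) + ε i := by
    rw [hS]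
    have : (0:ℝ) ≤ ((I : ℝ) - (j : ℕ) - 1) * dmax := by
      apply mul_nonneg _ hdmax.le
      have : ((j : ℕ) : ℝ) + 1 ≤ (I : ℝ) := by exact_mod_cast hj.le
      linarith
    linarith [hε i]
  -- sum of others is nonnegative
  have hothers : 0 ≤ (∑ k, d k) - d i := by
    rw [hS, hd]
    by_cases hij : i ≤ j
    · simp only [if_pos hij, sub_zero]
      apply mul_nonneg _ hdmax.le
      have : ((j : ℕ) : ℝ) + 1 ≤ (I : ℝ) := by exact_mod_cast hj.le
      linarith
    · simp only [if_neg hij]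
      have : ((j : ℕ) : ℝ) + 2 ≤ (I : ℝ) := by exact_mod_cast hj
      nlinarith
  have htpos : 0 < (∑ k, d k) - d i + x + ε i := by
    linarith [hε i]
  -- inverse relation : (ξ i * ℓ i)⁻¹ = m i + ε i
  have hminv : (ξ i * ℓ i)⁻¹ = m i + ε i := by rw [hm i]; ring
  unfold payoff0
  rw [hupd, Function.update_self]
  apply key_ineq _ _ _ _ _ hSpos htpos (by ring)
  by_cases hij : i ≤ j
  · -- d i = 0 ; need (x - 0) * ((S+ε)⁻¹ - a) ≤ 0, i.e. S ≥ m i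
    have hdi : d i = 0 := by rw [hd]; simp [hij]
    rw [hdi]
    have hmi : m i ≤ m j := by
      rcases eq_or_lt_of_le hij with h | h
      · rw [h]
      · exact (horder i j h).le
    have hmS : m i < ((I : ℝ) - (j : ℕ) - 1) * dmax := lt_of_le_of_lt hmi hlo
    have hinv : ((∑ k, d k) + ε i)⁻¹ ≤ ξ i * ℓ i := by
      rw [← inv_inv (ξ i * ℓ i)]
      apply inv_anti₀ (by rw [hminv, ← hminv]; exact inv_pos.2 ha)
      rw [hminv, hS]; linarith
    have : (0:ℝ) ≤ x - 0 := by linarith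
    nlinarith
  · -- d i = dmax ; need (x - dmax) * ((S+ε)⁻¹ - a) ≤ 0, i.e. S ≤ m i
    have hdi : d i = dmax := by rw [hd]; simp [hij]
    rw [hdi]
    have hji : (⟨(j : ℕ) + 1, hj⟩ : Fin I) ≤ i := by
      rw [Fin.le_def]
      simp only [not_le, Fin.lt_def] at hij
      simp only [Fin.val_mk]
      omega
    have hmi : m ⟨(j : ℕ) + 1, hj⟩ ≤ m i := by
      rcases eq_or_lt_of_le hji with h | h
      · rw [h]
      · exact (horder _ i h).le
    have hmS : ((I : ℝ) - (j : ℕ) - 1) * dmax < m i := lt_of_lt_of_le hhi hmi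
    have hinv : ξ i * ℓ i ≤ ((∑ k, d k) + ε i)⁻¹ := by
      rw [← inv_inv (ξ i * ℓ i)]
      apply inv_anti₀ hSpos
      rw [hminv, hS]; linarith
    have : x - dmax ≤ 0 := by linarith
    nlinarith
end

section
/- Assume θ_i = 0 for all i and the conditions of Theorem 2 case (i) with pivotal user j. If ln( ((I-j+1)d^max + ε_i) / ((I-j)d^max + ε_i) ) ≤ ξ_i ℓ_i d^max for all i ∈ {1, …, j}, then the profile d_i = 0 for i ≤ j and d_i = d^max for i > j is a Nash equilibrium of the restricted game with strategy sets {0, d^max}. -/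
open Finset

/-- Nash equilibrium of the restricted game forbidding partial revocation:
each user's strategy set is `{0, d^max}`. -/
def IsNashRestricted {I : ℕ} (ξ ℓ ε : Fin I → ℝ) (dmax : ℝ)
    (d : Fin I → ℝ) : Prop :=
  ∀ i : Fin I, ∀ x ∈ ({0, dmax} : Set ℝ),
    payoff0 ξ ℓ ε i (Function.update d i x) ≤ payoff0 ξ ℓ ε i d

lemma log_sub_log_ge (a b : ℝ) (hb : 0 < b) (ha : 0 < a) :
    (a - b) / a ≤ Real.log a - Real.log b := by
  have h := Real.log_le_sub_one_of_pos (show (0:ℝ) < b / a by positivity)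
  rw [Real.log_div hb.ne' ha.ne'] at h
  have : (a - b)/a = 1 - b/a := by field_simp
  linarith [this]

/-- Corollary 2, second bullet: under Theorem 2 case (i) with pivotal user `j`,
if `ln(((I-j) d^max + ε_i)/((I-j-1) d^max + ε_i)) ≤ ξ_i ℓ_i d^max` for every
user `i ≤ j`, then the profile `d_i = 0` for `i ≤ j` and `d_i = d^max` for
`i > j` is a Nash equilibrium of the restricted game. -/
theorem stmt15 (I : ℕ) (ξ ℓ ε : Fin I → ℝ) (dmax : ℝ)
    (hξ : ∀ i, 0 < ξ i) (hℓ : ∀ i, 0 < ℓ i) (hε : ∀ i, 0 < ε i)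
    (hdmax : 0 < dmax)
    (m : Fin I → ℝ) (hm : ∀ i, m i = (ξ i * ℓ i)⁻¹ - ε i)
    (horder : ∀ i k : Fin I, i < k → m i < m k)
    (j : Fin I)
    (hlo : ((I : ℝ) - (j : ℕ) - 1) * dmax < m j)
    (hhi : m j < ((I : ℝ) - (j : ℕ)) * dmax)
    (hlog : ∀ i : Fin I, i ≤ j →
      Real.log ((((I : ℝ) - (j : ℕ)) * dmax + ε i) /
          (((I : ℝ) - (j : ℕ) - 1) * dmax + ε i)) ≤ ξ i * ℓ i * dmax) :
    IsNashRestricted ξ ℓ ε dmax (fun i => if i ≤ j then 0 else dmax) := by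
  classical
  intro i x hx
  set d : Fin I → ℝ := (fun i => if i ≤ j then 0 else dmax) with hd
  have hjI : (j : ℕ) < I := j.isLt
  have hIj1 : (0:ℝ) ≤ (I : ℝ) - (j : ℕ) - 1 := by
    have : ((j:ℕ):ℝ) + 1 ≤ (I:ℝ) := by exact_mod_cast hjI
    linarith
  have hsum : ∑ k, d k = ((I : ℝ) - (j : ℕ) - 1) * dmax := by
    have h1 : ∑ k : Fin I, d k = ∑ k : Fin I, (if k ≤ j then (0:ℝ) else 1) * dmax := by
      apply Finset.sum_congr rfl
      intro k _
      by_cases h : k ≤ j <;> simp [hd, h]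
    rw [h1, ← Finset.sum_mul]
    congr 1
    rw [Finset.sum_ite, Finset.sum_const_zero, Finset.sum_const, zero_add, nsmul_eq_mul, mul_one]
    have hfil : Finset.univ.filter (fun k : Fin I => ¬ k ≤ j) = Finset.Ioi j := by
      ext k; simp [not_le]
    rw [hfil, Fin.card_Ioi]
    rw [Nat.sub_sub, Nat.cast_sub (by omega : 1 + (j:ℕ) ≤ I)]
    push_cast
    ring
  have hupd : ∀ y : ℝ, ∑ k, Function.update d i y k = ∑ k, d k - d i + y := by
    intro y
    rw [Finset.sum_update_of_mem (Finset.mem_univ i), Finset.sdiff_singleton_eq_erase,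
      Finset.sum_erase_eq_sub (Finset.mem_univ i)]
    ring
  rcases hx with hx | hx
  · -- x = 0
    subst hx
    by_cases hij : i ≤ j
    · -- d i = 0, update is d itself
      have : Function.update d i 0 = d := by
        funext k
        rcases eq_or_ne k i with rfl | hk
        · simp [hd, hij]
        · simp [Function.update_of_ne hk]
      rw [this]
    · -- i > j : deviating to 0
      have hdi : d i = dmax := by simp [hd, hij]
      have hij' : j < i := lt_of_not_ge hij
      have hiI : (i : ℕ) < I := i.isLt
      have hji : (j : ℕ) + 1 ≤ (i : ℕ) := hij'
      have hIj2 : (0:ℝ) ≤ (I : ℝ) - (j : ℕ) - 2 := by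
        have h1 : ((j:ℕ):ℝ) + 2 ≤ (I:ℝ) := by
          have : (j:ℕ) + 2 ≤ I := by omega
          exact_mod_cast this
        linarith
      set a : ℝ := ((I : ℝ) - (j : ℕ) - 1) * dmax + ε i with ha
      set b : ℝ := ((I : ℝ) - (j : ℕ) - 2) * dmax + ε i with hb
      have hapos : 0 < a := by nlinarith [hε i, mul_nonneg hIj1 hdmax.le]
      have hbpos : 0 < b := by nlinarith [hε i, mul_nonneg hIj2 hdmax.le]
      have hab : a - b = dmax := by rw [ha, hb]; ring
      have hmi : m j < m i := horder j i hij'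
      have hainv : a < (ξ i * ℓ i)⁻¹ := by
        have := hm i
        nlinarith [hlo, hmi]
      have hξℓ : 0 < ξ i * ℓ i := mul_pos (hξ i) (hℓ i)
      have hkey : ξ i * ℓ i * dmax ≤ Real.log a - Real.log b := by
        have h1 : ξ i * ℓ i * dmax ≤ dmax / a := by
          rw [div_eq_mul_inv]
          have : ξ i * ℓ i ≤ a⁻¹ := by
            rw [← inv_inv (ξ i * ℓ i)]
            exact inv_anti₀ hapos hainv.le
          nlinarith
        have h2 := log_sub_log_ge a b hbpos hapos
        rw [hab] at h2
        linarith
      unfold payoff0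
      rw [hupd 0, hdi, hsum, Function.update_self]
      have e1 : ((I : ℝ) - (j : ℕ) - 1) * dmax - dmax + 0 = b - ε i := by rw [hb]; ring
      rw [e1, sub_add_cancel]
      have e2 : ((I : ℝ) - (j : ℕ) - 1) * dmax + ε i = a := rfl
      rw [e2]
      linarith [hkey]
  · -- x = dmax
    rw [hx]
    by_cases hij : i ≤ j
    · -- d i = 0, deviating to dmax
      have hdi : d i = 0 := by simp [hd, hij]
      unfold payoff0
      rw [hupd dmax, hdi, hsum, Function.update_self]
      have e1 : ((I : ℝ) - (j : ℕ) - 1) * dmax - 0 + dmax = ((I : ℝ) - (j : ℕ)) * dmax := by ring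
      rw [e1]
      have hapos : 0 < ((I : ℝ) - (j : ℕ) - 1) * dmax + ε i := by
        nlinarith [hε i, mul_nonneg hIj1 hdmax.le]
      have hbpos : 0 < ((I : ℝ) - (j : ℕ)) * dmax + ε i := by
        nlinarith [hε i, mul_nonneg hIj1 hdmax.le, hdmax]
      have h := hlog i hij
      rw [Real.log_div hbpos.ne' hapos.ne'] at h
      simp [hd, hij]
      linarith
    · -- d i = dmax, update is d itself
      have : Function.update d i dmax = d := by
        funext k
        rcases eq_or_ne k i with rfl | hk
        · simp [hd, hij]
        · simp [Function.update_of_ne hk]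
      rw [this]
end

section
/- Under the hypotheses of Corollary 2's second bullet (forbidding partial revocation forces the pivotal user j to fully revoke), the total remaining data at the forbidding-partial equilibrium, (I-j)·d^max, is strictly less than the total remaining data at the allowing-partial equilibrium, which equals m_j = (ξ_j ℓ_j)^{-1} - ε_j; moreover every user i > j has strictly smaller payoff in the forbidding case, since its payoff difference is ln((m_j + ε_i)/((I-j)d^max + ε_i)) > 0. -/
open Finset

/-- Comparison under Corollary 2's second bullet: the total remaining data at
the forbidding-partial equilibrium is strictly less than at the
allowing-partial equilibrium (which totals `m j`), and every user `i > j` has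
strictly smaller payoff in the forbidding case, the payoff difference being
`ln((m j + ε_i)/((I-j-1) d^max + ε_i)) > 0` (0-indexed `j`). -/
theorem stmt16 (I : ℕ) (ξ ℓ ε : Fin I → ℝ) (dmax : ℝ)
    (hξ : ∀ i, 0 < ξ i) (hℓ : ∀ i, 0 < ℓ i) (hε : ∀ i, 0 < ε i)
    (hdmax : 0 < dmax)
    (m : Fin I → ℝ) (hm : ∀ i, m i = (ξ i * ℓ i)⁻¹ - ε i)
    (horder : ∀ i k : Fin I, i < k → m i < m k)
    (j : Fin I)
    (hlo : ((I : ℝ) - (j : ℕ) - 1) * dmax < m j)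
    (hhi : m j < ((I : ℝ) - (j : ℕ)) * dmax)
    (hlog : ∀ i : Fin I, i ≤ j →
      Real.log ((((I : ℝ) - (j : ℕ)) * dmax + ε i) /
          (((I : ℝ) - (j : ℕ) - 1) * dmax + ε i)) ≤ ξ i * ℓ i * dmax)
    (dAllow dForbid : Fin I → ℝ)
    (hA : dAllow = fun i =>
      if i < j then 0
      else if i = j then m j - ((I : ℝ) - (j : ℕ) - 1) * dmax
      else dmax)
    (hF : dForbid = fun i => if i ≤ j then 0 else dmax) :
    (∑ i, dForbid i < ∑ i, dAllow i) ∧ (∑ i, dAllow i = m j) ∧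
    ∀ i : Fin I, j < i →
      payoff0 ξ ℓ ε i dAllow - payoff0 ξ ℓ ε i dForbid
          = Real.log ((m j + ε i) / (((I : ℝ) - (j : ℕ) - 1) * dmax + ε i)) ∧
      0 < Real.log ((m j + ε i) / (((I : ℝ) - (j : ℕ) - 1) * dmax + ε i)) := by
  have hjI : (j : ℕ) < I := j.isLt
  set c : ℝ := ((I : ℝ) - (j : ℕ) - 1) * dmax with hc
  have hcast : ((I - 1 - (j:ℕ) : ℕ) : ℝ) = (I : ℝ) - (j : ℕ) - 1 := by
    have : (j:ℕ) ≤ I - 1 := by omega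
    push_cast [Nat.cast_sub (by omega : 1 ≤ I), Nat.cast_sub this]
    ring
  have hFsum : ∑ i, dForbid i = c := by
    subst hF
    calc ∑ i, (if i ≤ j then (0:ℝ) else dmax)
        = ∑ i ∈ Finset.univ.filter (fun i : Fin I => ¬ i ≤ j), dmax := by
          rw [Finset.sum_filter]
          exact Finset.sum_congr rfl (fun i _ => by split <;> simp_all)
      _ = ∑ i ∈ Finset.Ioi j, dmax := by
          congr 1; ext i; simp [not_le]
      _ = c := by
          rw [Finset.sum_const, Fin.card_Ioi, nsmul_eq_mul, hcast]
  have hFj : dForbid j = 0 := by rw [hF]; simp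
  have hupd : dAllow = Function.update dForbid j (m j - c) := by
    funext i
    rw [hA, hF]
    rcases lt_trichotomy i j with h | h | h
    · simp [h, h.ne, Function.update_of_ne h.ne, h.le]
    · subst h; simp
    · simp [h.ne', not_lt.mpr h.le, Function.update_of_ne h.ne',
        not_le.mpr h]
  have hAsum : ∑ i, dAllow i = m j := by
    rw [hupd, Finset.sum_update_of_mem (Finset.mem_univ j),
      ← Finset.erase_eq, Finset.sum_erase _ hFj, hFsum]
    ring
  have hc0 : 0 ≤ c := by
    apply mul_nonneg _ hdmax.le
    have : ((j:ℕ):ℝ) + 1 ≤ (I:ℝ) := by exact_mod_cast hjI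
    linarith
  refine ⟨by rw [hFsum, hAsum]; exact hlo, hAsum, fun i hji => ?_⟩
  have hpos : 0 < c + ε i := by linarith [hε i]
  have hmpos : 0 < m j + ε i := by linarith [hε i]
  constructor
  · unfold payoff0
    rw [hAsum, hFsum]
    have hdi : dAllow i = dForbid i := by
      rw [hA, hF]
      simp [hji.ne', not_lt.mpr hji.le, not_le.mpr hji]
    rw [hdi, Real.log_div hmpos.ne' hpos.ne']
    ring
  · rw [Real.log_pos_iff (by positivity)]
    rw [lt_div_iff₀ hpos]
    linarith
end
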